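/- Let Φ : ℝ → ℝ be bounded and continuous with M := sup_{x∈ℝ}|Φ(x)| > 0, differentiable at 0 with Φ'(0) > 1, and let λ(V) := 2M + V. Define for V > 0: I(V) := (1/V)·∫₀^V [ z·(2z + Φ(−z) − Φ(z)) ] / [ √(V²−z²)·(z − Φ(z) + λ(V))·(−z − Φ(−z) + λ(V)) ] dz. Then there exists V₁ > 0 such that I(V) < 0 for all 0 < V < V₁. -/

import Mathlib

open Set Filter MeasureTheory
open scoped Topology

/-- The matching functional
`I(V) = (1/V)·∫₀^V z(2z+Φ(−z)−Φ(z)) / (√(V²−z²)(z−Φ(z)+λ(V))(−z−Φ(−z)+λ(V))) dz`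
with `λ(V) = 2M + V`, whose zeros correspond to traveling wave velocities. -/
noncomputable def Ifun (Φ : ℝ → ℝ) (M V : ℝ) : ℝ :=
  (1/V) * ∫ z in (0:ℝ)..V, z * (2*z + Φ (-z) - Φ z) /
    (Real.sqrt (V^2 - z^2) * (z - Φ z + (2*M + V)) * (-z - Φ (-z) + (2*M + V)))

/-! Since `Φ'(0) > 1`, the function `z ↦ Φ z - Φ (-z) - 2z` vanishes at `0` with positive
derivative there, so the numerator of the integrand is negative on `(0, V)` once `V` is small.
The two factors `±z - Φ (±z) + λ(V)` stay above `M > 0` on `[0, V]`, so the integrand is a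
continuous function times `1/√(V² - z²)`, hence integrable, and its integral is negative. -/

theorem HasDerivAt.eventually_gt_right {g : ℝ → ℝ} {g' a : ℝ} (hg : HasDerivAt g g' a)
    (hg' : 0 < g') : ∀ᶠ x in 𝓝[>] a, g a < g x := by
  have hslope : ∀ᶠ x in 𝓝[>] a, 0 < slope g a x :=
    ((hasDerivAt_iff_tendsto_slope.mp hg).eventually (eventually_gt_nhds hg')).filter_mono
      (nhdsGT_le_nhdsNE a)
  filter_upwards [hslope, self_mem_nhdsWithin] with x hx hax
  exact (slope_pos_iff_of_le hax.le).mp hx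

theorem HasDerivAt.eventually_two_mul_lt_sub_comp_neg {Φ : ℝ → ℝ} {Φ' : ℝ}
    (hΦ : HasDerivAt Φ Φ' 0) (hΦ' : 1 < Φ') : ∀ᶠ z in 𝓝[>] 0, 2 * z < Φ z - Φ (-z) := by
  have hΦneg : HasDerivAt (fun z => Φ (-z)) (-Φ') 0 := by
    simpa [Function.comp_def] using hΦ.comp_of_eq 0 (hasDerivAt_neg' 0) neg_zero.symm
  have hg : HasDerivAt (fun z => Φ z - Φ (-z) - 2 * z) (Φ' - -Φ' - 2 * 1) 0 :=
    (hΦ.sub hΦneg).sub ((hasDerivAt_id' 0).const_mul 2)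
  filter_upwards [hg.eventually_gt_right (by linarith)] with z hz
  simp only [neg_zero, sub_self, mul_zero] at hz
  linarith

theorem intervalIntegrable_inv_sqrt_sq_sub_sq {V : ℝ} (hV : 0 < V) :
    IntervalIntegrable (fun z => (√(V ^ 2 - z ^ 2))⁻¹) volume 0 V := by
  have h01 : IntervalIntegrable (fun x => (√(1 - x ^ 2))⁻¹) volume 0 1 :=
    (Polynomial.Chebyshev.intervalIntegrable_sqrt_one_sub_sq_inv.mono_set
      (uIcc_subset_uIcc (by norm_num) (by norm_num))).congr fun x _ => Real.sqrt_inv _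
  have hscaled := (h01.comp_mul_left (c := V⁻¹)).const_mul V⁻¹
  simp only [zero_div, one_div, inv_inv] at hscaled
  refine hscaled.congr fun z _ => ?_
  have : V ^ 2 - z ^ 2 = V ^ 2 * (1 - (V⁻¹ * z) ^ 2) := by field_simp
  rw [this, Real.sqrt_mul (sq_nonneg V), Real.sqrt_sq hV.le, mul_inv]

namespace Ifun

variable {Φ : ℝ → ℝ} {M V : ℝ}

noncomputable def integrand (Φ : ℝ → ℝ) (M V z : ℝ) : ℝ :=
  z * (2*z + Φ (-z) - Φ z) /
    (Real.sqrt (V^2 - z^2) * (z - Φ z + (2*M + V)) * (-z - Φ (-z) + (2*M + V)))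

theorem le_factors (hΦM : ∀ x, |Φ x| ≤ M) {z : ℝ} (hz : |z| ≤ V) :
    M ≤ z - Φ z + (2*M + V) ∧ M ≤ -z - Φ (-z) + (2*M + V) :=
  ⟨by linarith [abs_le.mp (hΦM z), abs_le.mp hz],
    by linarith [abs_le.mp (hΦM (-z)), abs_le.mp hz]⟩

theorem intervalIntegrable_integrand (hΦc : Continuous Φ) (hΦM : ∀ x, |Φ x| ≤ M)
    (hM : 0 < M) (hV : 0 < V) : IntervalIntegrable (integrand Φ M V) volume 0 V := by
  have hden : ∀ z ∈ uIcc 0 V, (z - Φ z + (2*M + V)) * (-z - Φ (-z) + (2*M + V)) ≠ 0 := by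
    intro z hz
    rw [uIcc_of_le hV.le] at hz
    obtain ⟨hA, hB⟩ := le_factors hΦM (abs_le.mpr ⟨by linarith [hz.1], hz.2⟩)
    exact (mul_pos (by linarith) (by linarith)).ne'
  have hbounded : ContinuousOn (fun z => z * (2*z + Φ (-z) - Φ z) /
      ((z - Φ z + (2*M + V)) * (-z - Φ (-z) + (2*M + V)))) (uIcc 0 V) :=
    (by fun_prop : Continuous _).continuousOn.div (by fun_prop) hden
  refine ((intervalIntegrable_inv_sqrt_sq_sub_sq hV).continuousOn_mul hbounded).congr
    fun z _ => ?_
  simp only [integrand, div_eq_mul_inv, mul_inv]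
  ring

theorem integrand_neg (hΦM : ∀ x, |Φ x| ≤ M) (hM : 0 < M) {z : ℝ} (hz : z ∈ Ioo 0 V)
    (hsign : 2 * z < Φ z - Φ (-z)) : integrand Φ M V z < 0 := by
  obtain ⟨hA, hB⟩ := le_factors hΦM (abs_le.mpr ⟨by linarith [hz.1, hz.2], hz.2.le⟩)
  have hs : 0 < Real.sqrt (V^2 - z^2) := Real.sqrt_pos.mpr (by nlinarith [hz.1, hz.2])
  exact div_neg_of_neg_of_pos (mul_neg_of_pos_of_neg hz.1 (by linarith))
    (mul_pos (mul_pos hs (by linarith)) (by linarith))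

end Ifun

theorem Ifun_neg {Φ : ℝ → ℝ} {M V : ℝ} (hΦc : Continuous Φ) (hΦM : ∀ x, |Φ x| ≤ M)
    (hM : 0 < M) (hV : 0 < V) (hsign : ∀ z ∈ Ioo 0 V, 2 * z < Φ z - Φ (-z)) :
    Ifun Φ M V < 0 := by
  have hint := intervalIntegral.intervalIntegral_pos_of_pos_on
    (Ifun.intervalIntegrable_integrand hΦc hΦM hM hV).neg
    (fun z hz => neg_pos.mpr (Ifun.integrand_neg hΦM hM hz (hsign z hz))) hV
  rw [Pi.neg_def, intervalIntegral.integral_neg, neg_pos] at hint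
  exact mul_neg_of_pos_of_neg (one_div_pos.mpr hV) hint

/-- for bounded continuous `Φ` with `M = sup|Φ| > 0` which is
differentiable at `0` with `Φ'(0) > 1`, there is `V₁ > 0` such that `I(V) < 0` for all
`0 < V < V₁`. -/
theorem stmt_13 (Φ : ℝ → ℝ) (M : ℝ) (hΦc : Continuous Φ)
    (hbdd : BddAbove (Set.range fun x => |Φ x|))
    (hM : M = ⨆ x, |Φ x|) (hMpos : 0 < M)
    (hdiff : DifferentiableAt ℝ Φ 0) (hder : 1 < deriv Φ 0) :
    ∃ V₁ > 0, ∀ V : ℝ, 0 < V → V < V₁ → Ifun Φ M V < 0 := by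
  have hΦM : ∀ x, |Φ x| ≤ M := fun x => hM ▸ le_ciSup hbdd x
  obtain ⟨δ, hδ, hsign⟩ := mem_nhdsGT_iff_exists_Ioo_subset.mp
    (hdiff.hasDerivAt.eventually_two_mul_lt_sub_comp_neg hder)
  exact ⟨δ, hδ, fun V hV hVδ =>
    Ifun_neg hΦc hΦM hMpos hV fun z hz => hsign ⟨hz.1, hz.2.trans hVδ⟩⟩
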